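/- Taking q = 1 in the stuttering identity: with a_n = (-1)^{s_2(n)}, the convergent infinite products satisfy ∏_{n=0}^∞ (1 + a_{⌊n/2⌋}/(2n+1)) = √2 · ∏_{n=0}^∞ (1 + a_n/(2n+1)). -/

import Mathlib

open Real Finset Filter

/-- The ±1-valued Thue–Morse sequence: `a n = (-1)^(binary digit sum of n)`. -/
noncomputable def thueMorse (n : ℕ) : ℝ := (-1) ^ (Nat.digits 2 n).sum

/-!
Take logarithms. In the plain product consecutive factors pair up to `1 + O(1/k²)`, so the log
series converges. The stuttered product differs from it only in the odd-indexed factors, where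
`a ((2k+1)/2) = a k = -a (2k+1)`, and the difference of the log series is
`∑ a k * log ((2k+2)/(2k+1)) = -∑ w (2k+1)` with `w n = a n * log ((n+1)/n)`
(`thueMorseLogStep`).
Since `a (2k) = a k`, one has `w (2k) - w (2k+1) = w k` for `k ≥ 1`, hence
`2 ∑_{k<N} w (2k+1) = W (2N) - W N - log 2` for the partial sums `W` of `w`; these converge
(again by pairing), so the difference is `log 2 / 2` and the ratio of the products is `√2`.
-/

open Topology

section PairedSums

variable {M : Type*} [AddCommMonoid M]

theorem tendsto_atTop_of_tendsto_two_mul_of_tendsto_two_mul_add_one {α : Type*} {f : ℕ → α}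
    {l : Filter α} (heven : Tendsto (fun n => f (2 * n)) atTop l)
    (hodd : Tendsto (fun n => f (2 * n + 1)) atTop l) : Tendsto f atTop l := by
  intro s hs
  have hboth : ∀ᶠ n in atTop, f (2 * n) ∈ s ∧ f (2 * n + 1) ∈ s :=
    (heven.eventually_mem hs).and (hodd.eventually_mem hs)
  obtain ⟨N, hN⟩ := eventually_atTop.1 hboth
  refine eventually_atTop.2 ⟨2 * N, fun n hn => ?_⟩
  obtain ⟨k, rfl | rfl⟩ := Nat.even_or_odd' n
  exacts [(hN k (by omega)).1, (hN k (by omega)).2]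

theorem sum_range_two_mul (f : ℕ → M) (N : ℕ) :
    ∑ n ∈ range (2 * N), f n = ∑ k ∈ range N, (f (2 * k) + f (2 * k + 1)) := by
  induction N with
  | zero => simp
  | succ N ih => rw [Nat.mul_succ, sum_range_succ, sum_range_succ, ih, sum_range_succ, add_assoc]

variable [TopologicalSpace M] [ContinuousAdd M]

theorem tendsto_sum_range_of_tendsto_sum_range_two_mul {f : ℕ → M} {l : M}
    (hf : Tendsto f atTop (𝓝 0))
    (heven : Tendsto (fun N => ∑ n ∈ range (2 * N), f n) atTop (𝓝 l)) :
    Tendsto (fun N => ∑ n ∈ range N, f n) atTop (𝓝 l) := by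
  refine tendsto_atTop_of_tendsto_two_mul_of_tendsto_two_mul_add_one heven ?_
  have htwo : Tendsto (fun N : ℕ => 2 * N) atTop atTop := tendsto_id.const_mul_atTop' two_pos
  simpa only [sum_range_succ, Function.comp_def, add_zero] using heven.add (hf.comp htwo)

theorem tendsto_sum_range_tsum_of_summable_pairs {f : ℕ → M} (hf : Tendsto f atTop (𝓝 0))
    (hpairs : Summable fun k => f (2 * k) + f (2 * k + 1)) :
    Tendsto (fun N => ∑ n ∈ range N, f n) atTop (𝓝 (∑' k, (f (2 * k) + f (2 * k + 1)))) :=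
  tendsto_sum_range_of_tendsto_sum_range_two_mul hf <| by
    simpa only [sum_range_two_mul] using hpairs.hasSum.tendsto_sum_nat

end PairedSums

theorem summable_of_abs_le_div_sq {f : ℕ → ℝ} (C : ℝ) (h : ∀ k, |f k| ≤ C / ((k : ℝ) + 1) ^ 2) :
    Summable f := by
  have hsq : Summable fun k : ℕ => C / ((k : ℝ) + 1) ^ 2 := by
    simpa [div_eq_mul_inv] using
      ((summable_nat_add_iff 1).2 (Real.summable_one_div_nat_pow.2 one_lt_two)).mul_left C
  exact hsq.of_norm_bounded h

theorem tendsto_prod_range_of_tendsto_sum_range_log {f : ℕ → ℝ} {l : ℝ} (hf : ∀ n, 0 < f n)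
    (h : Tendsto (fun N => ∑ n ∈ range N, log (f n)) atTop (𝓝 l)) :
    Tendsto (fun N => ∏ n ∈ range N, f n) atTop (𝓝 (exp l)) := by
  simpa only [Function.comp_def, exp_sum, exp_log (hf _)] using (continuous_exp.tendsto l).comp h

@[simp]
theorem thueMorse_zero : thueMorse 0 = 1 := by simp [thueMorse]

theorem thueMorse_two_mul (n : ℕ) : thueMorse (2 * n) = thueMorse n := by
  rcases Nat.eq_zero_or_pos n with rfl | hn
  · rfl
  · simp [thueMorse, Nat.digits_def' one_lt_two (by omega : 0 < 2 * n)]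

theorem thueMorse_two_mul_add_one (n : ℕ) : thueMorse (2 * n + 1) = -thueMorse n := by
  simp [thueMorse, Nat.add_mod, show (2 * n + 1) / 2 = n by omega, pow_add]

@[simp]
theorem abs_thueMorse (n : ℕ) : |thueMorse n| = 1 := by simp [thueMorse]

theorem thueMorse_sq (n : ℕ) : thueMorse n ^ 2 = 1 := by rw [← sq_abs, abs_thueMorse, one_pow]

noncomputable def logFactor (m n : ℕ) : ℝ := log (1 + thueMorse m / (2 * n + 1))

theorem one_add_thueMorse_div_pos {m n : ℕ} (hmn : m ≤ n) :
    0 < 1 + thueMorse m / (2 * n + 1) := by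
  rcases Nat.eq_zero_or_pos n with rfl | hn
  · obtain rfl : m = 0 := by omega
    norm_num
  · have hn' : (1 : ℝ) ≤ n := by exact_mod_cast hn
    have hlt : |thueMorse m / (2 * n + 1)| < 1 := by
      rw [abs_div, abs_thueMorse, abs_of_pos (by positivity), div_lt_one (by positivity)]
      linarith
    linarith [neg_abs_le (thueMorse m / (2 * n + 1))]

theorem tendsto_logFactor (m : ℕ → ℕ) : Tendsto (fun n => logFactor (m n) n) atTop (𝓝 0) := by
  have hdiv : Tendsto (fun n : ℕ => thueMorse (m n) / (2 * n + 1)) atTop (𝓝 0) := by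
    refine squeeze_zero_norm (fun n => ?_) tendsto_one_div_add_atTop_nhds_zero_nat
    rw [norm_div, Real.norm_eq_abs, abs_thueMorse, Real.norm_of_nonneg (by positivity)]
    gcongr
    linarith [(n.cast_nonneg : (0 : ℝ) ≤ n)]
  simpa [logFactor] using (tendsto_const_nhds.add hdiv).log (by norm_num : (1 : ℝ) + 0 ≠ 0)

theorem logFactor_two_mul_add_logFactor_two_mul_add_one (k : ℕ) :
    logFactor (2 * k) (2 * k) + logFactor (2 * k + 1) (2 * k + 1) =
      log (1 + (2 * thueMorse k - 1) / ((4 * k + 1) * (4 * k + 3))) := by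
  rw [logFactor, logFactor, ← log_mul (one_add_thueMorse_div_pos le_rfl).ne'
    (one_add_thueMorse_div_pos le_rfl).ne', thueMorse_two_mul, thueMorse_two_mul_add_one]
  congr 1
  push_cast
  field_simp
  linear_combination (-(16 * (k : ℝ) ^ 2 + 16 * k + 3)) * thueMorse_sq k

theorem summable_logFactor_pairs :
    Summable fun k => logFactor (2 * k) (2 * k) + logFactor (2 * k + 1) (2 * k + 1) := by
  simp_rw [logFactor_two_mul_add_logFactor_two_mul_add_one]
  refine Real.summable_log_one_add_of_summable (summable_of_abs_le_div_sq 3 fun k => ?_)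
  have hnum : |2 * thueMorse k - 1| ≤ 3 := by
    rcases abs_le.1 (abs_thueMorse k).le with ⟨h₁, h₂⟩
    exact abs_le.2 ⟨by linarith, by linarith⟩
  have hden : ((k : ℝ) + 1) ^ 2 ≤ (4 * k + 1) * (4 * k + 3) := by
    nlinarith [(k.cast_nonneg : (0 : ℝ) ≤ k)]
  rw [abs_div, abs_of_pos (by positivity : (0 : ℝ) < (4 * k + 1) * (4 * k + 3))]
  exact div_le_div₀ (by norm_num) hnum (by positivity) hden

theorem tendsto_sum_logFactor :
    Tendsto (fun N => ∑ n ∈ range N, logFactor n n) atTop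
      (𝓝 (∑' k, (logFactor (2 * k) (2 * k) + logFactor (2 * k + 1) (2 * k + 1)))) :=
  tendsto_sum_range_tsum_of_summable_pairs (tendsto_logFactor id) summable_logFactor_pairs

-- `thueMorseLogStep 0 = 0` since `log 0 = 0`; this is why the identity
-- `thueMorseLogStep (2k) - thueMorseLogStep (2k+1) = thueMorseLogStep k` fails at `k = 0`.
noncomputable def thueMorseLogStep (n : ℕ) : ℝ := thueMorse n * (log (n + 1) - log n)

@[simp]
theorem thueMorseLogStep_zero : thueMorseLogStep 0 = 0 := by simp [thueMorseLogStep]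

@[simp]
theorem thueMorseLogStep_one : thueMorseLogStep 1 = -log 2 := by
  norm_num [thueMorseLogStep, thueMorse]

theorem tendsto_thueMorseLogStep : Tendsto thueMorseLogStep atTop (𝓝 0) := by
  rw [tendsto_zero_iff_norm_tendsto_zero]
  simpa [thueMorseLogStep, abs_mul] using tendsto_log_nat_add_one_sub_log.norm

theorem thueMorseLogStep_two_mul_add_thueMorseLogStep_two_mul_add_one {k : ℕ} (hk : k ≠ 0) :
    thueMorseLogStep (2 * k) + thueMorseLogStep (2 * k + 1) =
      thueMorse k * log (1 + 1 / (4 * k * (k + 1))) := by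
  have hk' : (0 : ℝ) < k := by positivity
  have hratio : 1 + 1 / (4 * k * (k + 1) : ℝ) = (2 * k + 1) ^ 2 / (2 * k * (2 * k + 2)) := by
    field_simp
    ring
  rw [hratio, log_div (by positivity) (by positivity), log_mul (by positivity) (by positivity),
    log_pow, thueMorseLogStep, thueMorseLogStep, thueMorse_two_mul, thueMorse_two_mul_add_one]
  push_cast
  ring_nf

theorem summable_thueMorseLogStep_pairs :
    Summable fun k => thueMorseLogStep (2 * k) + thueMorseLogStep (2 * k + 1) := by
  refine (summable_nat_add_iff 1).1 (summable_of_abs_le_div_sq 1 fun k => ?_)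
  rw [thueMorseLogStep_two_mul_add_thueMorseLogStep_two_mul_add_one k.succ_ne_zero, abs_mul,
    abs_thueMorse, one_mul]
  push_cast
  have hy : 0 ≤ 1 / (4 * ((k : ℝ) + 1) * ((k : ℝ) + 1 + 1)) := by positivity
  rw [abs_of_nonneg (log_nonneg (by linarith))]
  calc log (1 + 1 / (4 * ((k : ℝ) + 1) * ((k : ℝ) + 1 + 1)))
      ≤ 1 / (4 * ((k : ℝ) + 1) * ((k : ℝ) + 1 + 1)) := by
        linarith [log_le_sub_one_of_pos (by linarith : (0 : ℝ) < 1 + _)]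
    _ ≤ 1 / ((k : ℝ) + 1) ^ 2 := by
        gcongr
        nlinarith [(k.cast_nonneg : (0 : ℝ) ≤ k)]

theorem thueMorseLogStep_two_mul_sub_thueMorseLogStep_two_mul_add_one {k : ℕ} (hk : k ≠ 0) :
    thueMorseLogStep (2 * k) - thueMorseLogStep (2 * k + 1) = thueMorseLogStep k := by
  have hk' : (0 : ℝ) < k := by positivity
  have hlog : log (2 * k + 2) - log (2 * k) = log (k + 1) - log k := by
    rw [show (2 * k + 2 : ℝ) = 2 * (k + 1) by ring, log_mul two_ne_zero (by positivity),
      log_mul two_ne_zero hk'.ne']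
    ring
  rw [thueMorseLogStep, thueMorseLogStep, thueMorseLogStep, thueMorse_two_mul,
    thueMorse_two_mul_add_one, ← hlog]
  push_cast
  ring_nf

theorem two_mul_sum_thueMorseLogStep_odd {N : ℕ} (hN : N ≠ 0) :
    2 * ∑ k ∈ range N, thueMorseLogStep (2 * k + 1) =
      ∑ n ∈ range (2 * N), thueMorseLogStep n - ∑ n ∈ range N, thueMorseLogStep n - log 2 := by
  obtain ⟨M, rfl⟩ : ∃ M, N = M + 1 := ⟨N - 1, by omega⟩
  have hdiff : ∑ k ∈ range (M + 1), (thueMorseLogStep (2 * k) - thueMorseLogStep (2 * k + 1)) =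
      ∑ n ∈ range (M + 1), thueMorseLogStep n + log 2 := by
    rw [sum_range_succ', sum_range_succ' thueMorseLogStep]
    simp [thueMorseLogStep_two_mul_sub_thueMorseLogStep_two_mul_add_one]
  have hodd : ∑ k ∈ range (M + 1), (thueMorseLogStep (2 * k) + thueMorseLogStep (2 * k + 1)) -
      ∑ k ∈ range (M + 1), (thueMorseLogStep (2 * k) - thueMorseLogStep (2 * k + 1)) =
      2 * ∑ k ∈ range (M + 1), thueMorseLogStep (2 * k + 1) := by
    rw [← sum_sub_distrib, mul_sum]
    exact sum_congr rfl fun k _ => by ring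
  rw [sum_range_two_mul]
  linarith

theorem tendsto_sum_thueMorseLogStep_odd :
    Tendsto (fun N => ∑ k ∈ range N, thueMorseLogStep (2 * k + 1)) atTop (𝓝 (-(log 2 / 2))) := by
  have hW := tendsto_sum_range_tsum_of_summable_pairs tendsto_thueMorseLogStep
    summable_thueMorseLogStep_pairs
  have htwo : Tendsto (fun N : ℕ => 2 * N) atTop atTop := tendsto_id.const_mul_atTop' two_pos
  have hlim := (((hW.comp htwo).sub hW).sub_const (log 2)).div_const 2
  rw [sub_self, zero_sub, neg_div] at hlim
  refine hlim.congr' (eventually_atTop.2 ⟨1, fun N hN => ?_⟩)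
  simp only [Function.comp_apply]
  rw [← two_mul_sum_thueMorseLogStep_odd (by omega : N ≠ 0)]
  ring

theorem log_one_add_div_sub_log_one_sub_div {a c : ℝ} (ha : |a| = 1) (hc : 1 < c) :
    log (1 + a / c) - log (1 - a / c) = a * (log (c + 1) - log (c - 1)) := by
  have hc₀ : c ≠ 0 := by positivity
  have hplus : 1 + 1 / c = (c + 1) / c := by field_simp
  have hminus : 1 - 1 / c = (c - 1) / c := by field_simp
  rcases (abs_eq zero_le_one).1 ha with rfl | rfl
  · rw [hplus, hminus, log_div (by linarith) hc₀, log_div (by linarith) hc₀]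
    ring
  · rw [neg_div, sub_neg_eq_add, ← sub_eq_add_neg, hplus, hminus, log_div (by linarith) hc₀,
      log_div (by linarith) hc₀]
    ring

theorem logFactor_half_two_mul_add_one (k : ℕ) :
    logFactor ((2 * k + 1) / 2) (2 * k + 1) =
      logFactor (2 * k + 1) (2 * k + 1) - thueMorseLogStep (2 * k + 1) := by
  have hc : (1 : ℝ) < 2 * ↑(2 * k + 1) + 1 := by push_cast; linarith [(k.cast_nonneg : (0 : ℝ) ≤ k)]
  have hswap := log_one_add_div_sub_log_one_sub_div (abs_thueMorse k) hc
  have hlog : log (2 * ↑(2 * k + 1) + 1 + 1) - log (2 * ↑(2 * k + 1) + 1 - 1) =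
      log (↑(2 * k + 1) + 1) - log ↑(2 * k + 1) := by
    push_cast
    rw [show (2 * (2 * k + 1) + 1 + 1 : ℝ) = 2 * (2 * k + 1 + 1) by ring,
      show (2 * (2 * k + 1) + 1 - 1 : ℝ) = 2 * (2 * k + 1) by ring,
      log_mul two_ne_zero (by positivity), log_mul two_ne_zero (by positivity)]
    ring
  rw [show (2 * k + 1) / 2 = k by omega, logFactor, logFactor, thueMorseLogStep,
    thueMorse_two_mul_add_one, neg_div, ← sub_eq_add_neg]
  rw [hlog] at hswap
  linarith

theorem tendsto_sum_logFactor_half :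
    Tendsto (fun N => ∑ n ∈ range N, logFactor (n / 2) n) atTop
      (𝓝 ((∑' k, (logFactor (2 * k) (2 * k) + logFactor (2 * k + 1) (2 * k + 1))) +
        log 2 / 2)) := by
  have hsplit (N : ℕ) : ∑ n ∈ range (2 * N), logFactor (n / 2) n =
      ∑ n ∈ range (2 * N), logFactor n n - ∑ k ∈ range N, thueMorseLogStep (2 * k + 1) := by
    rw [sum_range_two_mul, sum_range_two_mul, ← sum_sub_distrib]
    refine sum_congr rfl fun k _ => ?_
    rw [logFactor_half_two_mul_add_one, Nat.mul_div_cancel_left k two_pos]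
    unfold logFactor
    rw [thueMorse_two_mul]
    ring
  have htwo : Tendsto (fun N : ℕ => 2 * N) atTop atTop := tendsto_id.const_mul_atTop' two_pos
  refine tendsto_sum_range_of_tendsto_sum_range_two_mul (tendsto_logFactor (· / 2)) ?_
  simp_rw [hsplit, ← sub_neg_eq_add _ (log 2 / 2)]
  exact (tendsto_sum_logFactor.comp htwo).sub tendsto_sum_thueMorseLogStep_odd

theorem stuttered_product_q_one :
    ∃ I1 I2 : ℝ, I1 ≠ 0 ∧ I2 ≠ 0 ∧
      Filter.Tendsto
        (fun N => ∏ n ∈ Finset.range N, (1 + thueMorse n / (2 * n + 1)))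
        Filter.atTop (nhds I1) ∧
      Filter.Tendsto
        (fun N => ∏ n ∈ Finset.range N, (1 + thueMorse (n / 2) / (2 * n + 1)))
        Filter.atTop (nhds I2) ∧
      I2 = Real.sqrt 2 * I1 := by
  set l := ∑' k, (logFactor (2 * k) (2 * k) + logFactor (2 * k + 1) (2 * k + 1))
  refine ⟨exp l, exp (l + log 2 / 2), exp_ne_zero _, exp_ne_zero _,
    tendsto_prod_range_of_tendsto_sum_range_log (fun n => one_add_thueMorse_div_pos le_rfl)
      tendsto_sum_logFactor,
    tendsto_prod_range_of_tendsto_sum_range_log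
      (fun n => one_add_thueMorse_div_pos (Nat.div_le_self n 2)) tendsto_sum_logFactor_half, ?_⟩
  rw [exp_add, exp_half, exp_log two_pos, mul_comm]
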